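/- arXiv:1807.06609 — 3 statements merged into one kernel-verified Lean document; each statement's English description precedes it below -/
import Mathlib

section
/- A ring R with identity is right principally-injective (i.e., every R-module homomorphism f : aR → R with a ∈ R extends to an endomorphism of R) if and only if for every a ∈ R, the left annihilator of the right annihilator of a equals Ra, i.e., l_R(r_R(a)) = Ra. -/
/-- The principal right ideal `aR`. -/
def rightIdeal {R : Type*} [Ring R] (a : R) : Set R := {x | ∃ t, x = a * t}

/-- The principal left ideal `Ra`. -/
def leftIdeal {R : Type*} [Ring R] (a : R) : Set R := {x | ∃ c, x = c * a}

/-- Right annihilator of an element. -/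
def rAnn {R : Type*} [Ring R] (a : R) : Set R := {t | a * t = 0}

/-- Left annihilator of a subset. -/
def lAnn {R : Type*} [Ring R] (X : Set R) : Set R := {t | ∀ x ∈ X, t * x = 0}

/-- `R` is right principally-injective: every right `R`-module homomorphism
`f : aR → R` extends to a right `R`-module endomorphism of `R`. -/
def RightPInjective (R : Type*) [Ring R] : Prop :=
  ∀ a : R, ∀ f : {x : R // x ∈ rightIdeal a} → R,
    (∀ x y z : {x : R // x ∈ rightIdeal a}, (z : R) = (x : R) + (y : R) → f z = f x + f y) →
    (∀ (x z : {x : R // x ∈ rightIdeal a}) (t : R), (z : R) = (x : R) * t → f z = f x * t) →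
    ∃ g : R → R, (∀ x y : R, g (x + y) = g x + g y) ∧ (∀ (x t : R), g (x * t) = g x * t) ∧
      ∀ x : {x : R // x ∈ rightIdeal a}, g (x : R) = f x

theorem stmt_0 (R : Type*) [Ring R] :
    RightPInjective R ↔ ∀ a : R, lAnn (rAnn a) = leftIdeal a := by
  constructor
  · intro hP a
    ext b
    constructor
    · -- b ∈ lAnn (rAnn a) → b ∈ Ra
      intro hb
      -- key: a * s = a * s' → b * s = b * s'
      have key : ∀ s s' : R, a * s = a * s' → b * s = b * s' := by
        intro s s' h
        have h0 : a * (s - s') = 0 := by rw [mul_sub, h, sub_self]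
        have := hb (s - s') h0
        rw [mul_sub] at this
        exact sub_eq_zero.mp this
      -- define f on aR by choosing a witness
      set f : {x : R // x ∈ rightIdeal a} → R :=
        fun x => b * Classical.choose x.2 with hf
      have hfspec : ∀ (x : {x : R // x ∈ rightIdeal a}) (t : R),
          (x : R) = a * t → f x = b * t := by
        intro x t hx
        have := Classical.choose_spec x.2
        exact key _ _ (by rw [← this, hx])
      have hadd : ∀ x y z : {x : R // x ∈ rightIdeal a},
          (z : R) = (x : R) + (y : R) → f z = f x + f y := by
        intro x y z h
        obtain ⟨tx, hx⟩ := x.2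
        obtain ⟨ty, hy⟩ := y.2
        have hz : (z : R) = a * (tx + ty) := by rw [h, hx, hy, mul_add]
        rw [hfspec z _ hz, hfspec x _ hx, hfspec y _ hy, mul_add]
      have hmul : ∀ (x z : {x : R // x ∈ rightIdeal a}) (t : R),
          (z : R) = (x : R) * t → f z = f x * t := by
        intro x z t h
        obtain ⟨tx, hx⟩ := x.2
        have hz : (z : R) = a * (tx * t) := by rw [h, hx, mul_assoc]
        rw [hfspec z _ hz, hfspec x _ hx, mul_assoc]
      obtain ⟨g, hg1, hg2, hg3⟩ := hP a f hadd hmul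
      have haR : a ∈ rightIdeal a := ⟨1, (mul_one a).symm⟩
      have h1 : g a = b := by
        have := hg3 ⟨a, haR⟩
        rw [hfspec ⟨a, haR⟩ 1 (mul_one a).symm] at this
        simpa using this
      have h2 : g a = g 1 * a := by
        have := hg2 1 a
        rwa [one_mul] at this
      exact ⟨g 1, by rw [← h1, h2]⟩
    · -- Ra ⊆ lAnn (rAnn a)
      rintro ⟨c, rfl⟩ t ht
      rw [mul_assoc, ht, mul_zero]
  · intro h a f hadd hmul
    have haR : a ∈ rightIdeal a := ⟨1, (mul_one a).symm⟩
    set b := f ⟨a, haR⟩ with hb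
    have hbmem : b ∈ lAnn (rAnn a) := by
      intro t ht
      have hz : (a * t) ∈ rightIdeal a := ⟨t, rfl⟩
      have h1 : f ⟨a * t, hz⟩ = b * t := hmul ⟨a, haR⟩ ⟨a * t, hz⟩ t rfl
      -- the element a*t equals 0, so f of it is 0
      have h0 : f ⟨a * t, hz⟩ = 0 := by
        have := hadd ⟨a * t, hz⟩ ⟨a * t, hz⟩ ⟨a * t, hz⟩ (by simp [show a * t = 0 from ht])
        exact left_eq_add.mp this
      rw [h1] at h0
      exact h0
    rw [h a] at hbmem
    obtain ⟨c, hc⟩ := hbmem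
    refine ⟨fun x => c * x, fun x y => mul_add c x y, fun x t => (mul_assoc c x t).symm, ?_⟩
    rintro ⟨x, ⟨t, rfl⟩⟩
    have := hmul ⟨a, haR⟩ ⟨a * t, ⟨t, rfl⟩⟩ t rfl
    rw [this, ← hb, hc, mul_assoc]
end

section
/- Let R be a semiprime ring with identity that is right principally-injective. Then for every idempotent e ∈ R, the corner ring eRe is right principally-injective. -/
/-- `R` is semiprime: every two-sided ideal squaring to zero is zero. -/
def IsSemiprime (R : Type*) [Ring R] : Prop :=
  ∀ I : TwoSidedIdeal R, (∀ x ∈ I, ∀ y ∈ I, x * y = 0) → I = ⊥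

lemma semiprime_aux {R : Type*} [Ring R] (hsp : IsSemiprime R) (w : R)
    (hw : ∀ r : R, w * r * w = 0) : w = 0 := by
  set T : Set R := {z | ∃ r s : R, z = r * w * s} with hT
  set C : AddSubgroup R := AddSubgroup.closure T with hC
  have memC : ∀ x, x ∈ C ↔ x ∈ (C : Set R) := fun _ => Iff.rfl
  have mul_left : ∀ {x y : R}, y ∈ C → x * y ∈ C := by
    intro x y hy
    refine AddSubgroup.closure_induction (fun z hz => ?_) (by simpa using zero_mem C) ?_ ?_ hy
    · obtain ⟨r, s, rfl⟩ := hz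
      exact AddSubgroup.subset_closure ⟨x * r, s, by noncomm_ring⟩
    · intro a b _ _ ha hb; simpa [mul_add] using add_mem ha hb
    · intro a _ ha; simpa [mul_neg] using neg_mem ha
  have mul_right : ∀ {x y : R}, x ∈ C → x * y ∈ C := by
    intro x y hx
    refine AddSubgroup.closure_induction (fun z hz => ?_) (by simpa using zero_mem C) ?_ ?_ hx
    · obtain ⟨r, s, rfl⟩ := hz
      exact AddSubgroup.subset_closure ⟨r, s * y, by noncomm_ring⟩
    · intro a b _ _ ha hb; simpa [add_mul] using add_mem ha hb
    · intro a _ ha; simpa [neg_mul] using neg_mem ha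
  set I : TwoSidedIdeal R := TwoSidedIdeal.mk' (C : Set R) (zero_mem C)
    (fun ha hb => add_mem ha hb) (fun ha => neg_mem ha) mul_left mul_right with hI
  have hmem : ∀ x, x ∈ I ↔ x ∈ C := fun x => TwoSidedIdeal.mem_mk' _ _ _ _ _ _ x
  have hsq : ∀ x ∈ I, ∀ y ∈ I, x * y = 0 := by
    intro x hx y hy
    rw [hmem] at hx hy
    refine AddSubgroup.closure_induction (fun z hz => ?_) (by simp) ?_ ?_ hx
    · obtain ⟨r, s, rfl⟩ := hz
      refine AddSubgroup.closure_induction (fun u hu => ?_) (by simp) ?_ ?_ hy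
      · obtain ⟨r', s', rfl⟩ := hu
        have : w * (s * r') * w = 0 := hw _
        calc r * w * s * (r' * w * s') = r * (w * (s * r') * w) * s' := by noncomm_ring
          _ = 0 := by rw [this]; simp
      · intro a b _ _ ha hb; rw [mul_add, ha, hb, add_zero]
      · intro a _ ha; rw [mul_neg, ha, neg_zero]
    · intro a b _ _ ha hb; rw [add_mul, ha, hb, add_zero]
    · intro a _ ha; rw [neg_mul, ha, neg_zero]
  have : I = ⊥ := hsp I hsq
  have hwI : w ∈ I := by
    rw [hmem]; exact AddSubgroup.subset_closure ⟨1, 1, by simp⟩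
  rw [this, TwoSidedIdeal.mem_bot] at hwI
  exact hwI

theorem stmt_4 (R : Type*) [Ring R] (hsp : IsSemiprime R)
    (hpinj : ∀ a : R, lAnn (rAnn a) = leftIdeal a)
    (e : R) (he : e * e = e) :
    -- the corner ring `S = eRe` is right principally-injective:
    -- for every `a ∈ S`, `l_S(r_S(a)) = Sa`.
    ∀ a ∈ {x : R | ∃ r : R, x = e * r * e},
      {x ∈ {x : R | ∃ r : R, x = e * r * e} |
          ∀ t ∈ {x : R | ∃ r : R, x = e * r * e}, a * t = 0 → x * t = 0} =
      {x ∈ {x : R | ∃ r : R, x = e * r * e} |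
          ∃ s ∈ {x : R | ∃ r : R, x = e * r * e}, x = s * a} := by
  rintro a ⟨ra, rfl⟩
  set a := e * ra * e with ha
  have hae : a * e = a := by rw [ha, mul_assoc, he]
  have hea : e * a = a := by rw [ha, ← mul_assoc, ← mul_assoc, he]
  ext x
  simp only [Set.mem_setOf_eq, Set.mem_sep_iff]
  constructor
  · rintro ⟨⟨rx, hx⟩, hl⟩
    have hxe : x * e = x := by rw [hx, mul_assoc, he]
    have hex : e * x = x := by rw [hx, ← mul_assoc, ← mul_assoc, he]
    have hcl : ∀ t : R, a * t = 0 → x * t = 0 := by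
      intro t ht
      have key : ∀ r : R, x * t * r * e = 0 := by
        intro r
        have hS : (e * (t * r) * e) ∈ {x : R | ∃ r : R, x = e * r * e} := ⟨t * r, rfl⟩
        have h0 : a * (e * (t * r) * e) = 0 := by
          calc a * (e * (t * r) * e) = (a * t) * r * e := by
                rw [← mul_assoc, ← mul_assoc, hae]; noncomm_ring
            _ = 0 := by rw [ht]; simp
        have := hl _ hS h0
        calc x * t * r * e = x * e * ((t * r) * e) := by rw [hxe]; noncomm_ring
          _ = x * (e * (t * r) * e) := by noncomm_ring
          _ = 0 := this
      refine semiprime_aux hsp (x * t) (fun r => ?_)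
      calc x * t * r * (x * t) = (x * t * r * e) * (rx * e * t) := by rw [hx]; noncomm_ring
        _ = 0 := by rw [key]; simp
    have hxl : x ∈ lAnn (rAnn a) := fun t ht => hcl t ht
    rw [hpinj a] at hxl
    obtain ⟨c, hc⟩ := hxl
    refine ⟨⟨rx, hx⟩, e * c * e, ⟨c, rfl⟩, ?_⟩
    calc x = e * (c * a) := by rw [← hc, hex]
      _ = e * c * e * a := by rw [mul_assoc (e * c) e a, hea, mul_assoc]
  · rintro ⟨hxS, s, ⟨rs, rfl⟩, rfl⟩
    refine ⟨hxS, fun t _ ht => ?_⟩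
    rw [mul_assoc, ht, mul_zero]
end

section
/- Let R be a ring with identity. If R is semiprime, right principally-injective, and every principal right ideal of R is projective as a right R-module, then R is von Neumann regular. -/
/-! If `aR` is projective, the surjection `R → aR`, `r ↦ ar`, splits; the image `u` of `a` under
the splitting satisfies `au = a` and kills `r(a)`, so P-injectivity puts `u` in `Ra`, say `u = da`,
and then `a = au = ada`. -/

theorem exists_smul_eq_self_of_projective_span_singleton {S M : Type*} [Ring S]
    [AddCommGroup M] [Module S M] (x : M) [Module.Projective S (Submodule.span S {x})] :
    ∃ s : S, s • x = x ∧ ∀ t : S, t • x = 0 → t * s = 0 := by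
  let f : S →ₗ[S] Submodule.span S {x} := (LinearMap.toSpanSingleton S M x).codRestrict _
    fun t => Submodule.smul_mem _ t (Submodule.mem_span_singleton_self x)
  have hf : Function.Surjective f := by
    rintro ⟨y, hy⟩
    obtain ⟨t, rfl⟩ := Submodule.mem_span_singleton.mp hy
    exact ⟨t, rfl⟩
  obtain ⟨g, hg⟩ := Module.projective_lifting_property f LinearMap.id hf
  let x' : Submodule.span S {x} := ⟨x, Submodule.mem_span_singleton_self x⟩
  refine ⟨g x', congrArg Subtype.val (LinearMap.congr_fun hg x'), fun t ht => ?_⟩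
  have htx' : t • x' = 0 := Subtype.ext ht
  rw [← smul_eq_mul, ← map_smul, htx', map_zero]

theorem stmt_6_general (R : Type*) [Ring R]
    (hpinj : ∀ a : R, lAnn (rAnn a) = leftIdeal a)
    (hpp : ∀ a : R, Module.Projective Rᵐᵒᵖ (Submodule.span Rᵐᵒᵖ ({a} : Set R))) :
    ∀ a : R, ∃ r : R, a = a * r * a := by
  intro a
  have := hpp a
  obtain ⟨s, hsa, hann⟩ := exists_smul_eq_self_of_projective_span_singleton (S := Rᵐᵒᵖ) a
  have hu : s.unop ∈ lAnn (rAnn a) := fun t ht =>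
    MulOpposite.op_injective (hann (MulOpposite.op t) ht)
  rw [hpinj a] at hu
  obtain ⟨d, hd⟩ := hu
  refine ⟨d, ?_⟩
  rw [mul_assoc, ← hd]
  exact hsa.symm

theorem stmt_6 (R : Type*) [Ring R] (hsp : IsSemiprime R)
    (hpinj : ∀ a : R, lAnn (rAnn a) = leftIdeal a)
    (hpp : ∀ a : R, Module.Projective Rᵐᵒᵖ (Submodule.span Rᵐᵒᵖ ({a} : Set R))) :
    ∀ a : R, ∃ r : R, a = a * r * a :=
  stmt_6_general R hpinj hpp
end
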